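/- arXiv:1302.3194 — 5 statements merged into one kernel-verified Lean document; each statement's English description precedes it below -/
import Mathlib

section
/- Let M be a compact metric space and f : M → M a continuous map whose critical set C_f has empty interior. Then the set {x ∈ M : fⁿ(x) ∉ C_f for all n ≥ 0} = ⋂_{n ≥ 0} f^{-n}(M \ C_f) is a residual subset of M. -/
/-!
The points at which `f` is a local homeomorphism form an open set `G`, dense because its
complement `C_f` has empty interior. At a point of `G` the map `f` sends neighbourhoods onto
neighbourhoods, so preimages under `f` of dense sets are dense; hence every `f^{-n}(G)` is open
and dense, and the points whose orbit avoids `C_f` form their countable intersection.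
-/

open Set Filter Topology

section

variable {X Y : Type*} [TopologicalSpace X] [TopologicalSpace Y]

theorem isOpen_setOf_isLocalHomeomorphOn_singleton (f : X → Y) :
    IsOpen {x : X | IsLocalHomeomorphOn f {x}} := by
  refine isOpen_iff_mem_nhds.mpr fun x hx => ?_
  obtain ⟨e, hxe, hfe⟩ := hx x rfl
  filter_upwards [e.open_source.mem_nhds hxe] with y hy
  exact fun z hz => ⟨e, hz ▸ hy, hfe⟩

theorem Dense.preimage_of_dense_isLocalHomeomorphOn {D : Set Y} (hD : Dense D) {f : X → Y}
    (hG : Dense {x : X | IsLocalHomeomorphOn f {x}}) : Dense (f ⁻¹' D) := by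
  refine dense_iff_inter_open.mpr fun U hU hUne => ?_
  obtain ⟨x, hxU, hxG⟩ := hG.inter_open_nonempty U hU hUne
  have himage : f '' U ∈ 𝓝 (f x) := by
    rw [← hxG.map_nhds_eq rfl]
    exact image_mem_map (hU.mem_nhds hxU)
  obtain ⟨_, hyD, z, hzU, rfl⟩ := hD.inter_nhds_nonempty himage
  exact ⟨z, hzU, hyD⟩

end

theorem Dense.iterate_preimage_of_dense_isLocalHomeomorphOn {X : Type*} [TopologicalSpace X]
    {D : Set X} (hD : Dense D) {f : X → X} (hG : Dense {x : X | IsLocalHomeomorphOn f {x}})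
    (n : ℕ) : Dense (f^[n] ⁻¹' D) := by
  induction n with
  | zero => exact hD
  | succ n ih =>
    rw [Function.iterate_succ, preimage_comp]
    exact ih.preimage_of_dense_isLocalHomeomorphOn hG

theorem orbit_avoids_critical_set_residual_general {M : Type*} [MetricSpace M]
    (f : M → M) (hf : Continuous f)
    (hC : interior {x : M | ¬ IsLocalHomeomorphOn f {x}} = ∅) :
    {x : M | ∀ n : ℕ, f^[n] x ∉ {y : M | ¬ IsLocalHomeomorphOn f {y}}} ∈ residual M := by
  set G : Set M := {x : M | IsLocalHomeomorphOn f {x}}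
  have hGo : IsOpen G := isOpen_setOf_isLocalHomeomorphOn_singleton f
  have hGd : Dense G := by
    simpa only [compl_ofPred, not_not] using interior_eq_empty_iff_dense_compl.mp hC
  have horbit : {x : M | ∀ n : ℕ, f^[n] x ∉ {y : M | ¬ IsLocalHomeomorphOn f {y}}} =
      ⋂ n : ℕ, f^[n] ⁻¹' G := by
    ext x
    simp [G]
  rw [horbit, countable_iInter_mem]
  exact fun n => residual_of_dense_open (hGo.preimage (hf.iterate n))
    (hGd.iterate_preimage_of_dense_isLocalHomeomorphOn hGd n)

/-- If the critical set of a continuous self-map `f` of a compact metric space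
(the set of points at which `f` is not a local homeomorphism) has empty interior,
then the set of points whose whole forward orbit avoids the critical set is
residual in `M`. -/
theorem orbit_avoids_critical_set_residual {M : Type*} [MetricSpace M] [CompactSpace M]
    (f : M → M) (hf : Continuous f)
    (hC : interior {x : M | ¬ IsLocalHomeomorphOn f {x}} = ∅) :
    {x : M | ∀ n : ℕ, f^[n] x ∉ {y : M | ¬ IsLocalHomeomorphOn f {y}}} ∈ residual M :=
  orbit_avoids_critical_set_residual_general f hf hC
end

section
/- Let M be a nonempty compact metric space and f : M → M a continuous map. Suppose there exists a dense subset D ⊆ M such that every point x ∈ D has dense pre-orbit O⁻(x). Then the set of points of M with dense forward orbit is residual in M; in particular f is transitive. -/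
/-!
A point has dense forward orbit exactly when its orbit meets every member of a countable basis,
so these points form the countable intersection of the open sets `⋃ n, f^[n] ⁻¹' U`. Each of
them is dense: `U` contains a point of `D`, whose dense pre-orbit lies in `⋃ n, f^[n] ⁻¹' U`.
By the Baire category theorem the intersection is dense, hence nonempty.
-/

open Set TopologicalSpace

section

variable {X : Type*} [TopologicalSpace X] {f : X → X}

theorem dense_iUnion_preimage_iterate_of_dense_preorbits {D : Set X} (hD : Dense D)
    (hpre : ∀ x ∈ D, Dense {w : X | ∃ n : ℕ, f^[n] w = x}) {U : Set X} (hU : IsOpen U)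
    (hUne : U.Nonempty) : Dense (⋃ n : ℕ, f^[n] ⁻¹' U) := by
  obtain ⟨d, hdU, hdD⟩ := hD.inter_open_nonempty U hU hUne
  refine (hpre d hdD).mono ?_
  rintro w ⟨n, rfl⟩
  exact mem_iUnion.2 ⟨n, hdU⟩

theorem residual_dense_range_iterate [SecondCountableTopology X] (hf : Continuous f)
    (hdense : ∀ U : Set X, IsOpen U → U.Nonempty → Dense (⋃ n : ℕ, f^[n] ⁻¹' U)) :
    {x : X | Dense (range fun n : ℕ => f^[n] x)} ∈ residual X := by
  obtain ⟨b, hbc, hb_empty, hb⟩ := exists_countable_basis X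
  have hU_ne : ∀ U ∈ b, U.Nonempty := fun U hU =>
    nonempty_iff_ne_empty.2 fun h => hb_empty (h ▸ hU)
  have hres : (⋂ U ∈ b, ⋃ n : ℕ, f^[n] ⁻¹' U) ∈ residual X :=
    (countable_bInter_mem hbc).2 fun U hU =>
      residual_of_dense_open (isOpen_iUnion fun n => (hb.isOpen hU).preimage (hf.iterate n))
        (hdense U (hb.isOpen hU) (hU_ne U hU))
  refine Filter.mem_of_superset hres fun x hx => hb.dense_iff.2 fun U hU _ => ?_
  obtain ⟨n, hn⟩ := mem_iUnion.1 (mem_iInter₂.1 hx U hU)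
  exact ⟨f^[n] x, hn, n, rfl⟩

end

/-- Let `f` be a continuous self-map of a nonempty compact metric space `M`. If there
is a dense subset `D ⊆ M` all of whose points have dense pre-orbit, then the set of
points with dense forward orbit is residual in `M`; in particular `f` is transitive. -/
theorem dense_preorbits_implies_transitive {M : Type*} [MetricSpace M] [CompactSpace M]
    [Nonempty M] (f : M → M) (hf : Continuous f)
    (D : Set M) (hD : Dense D)
    (hpre : ∀ x ∈ D, Dense {w : M | ∃ n : ℕ, f^[n] w = x}) :
    {x : M | Dense (Set.range fun n : ℕ => f^[n] x)} ∈ residual M ∧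
      ∃ x : M, Dense (Set.range fun n : ℕ => f^[n] x) := by
  have hres := residual_dense_range_iterate hf fun _ hU hUne =>
    dense_iUnion_preimage_iterate_of_dense_preorbits hD hpre hU hUne
  exact ⟨hres, (dense_of_mem_residual hres).nonempty⟩
end

section
/- Let Δ be a nonempty bounded complete metric space, (P_i)_{i ∈ I} a countable family of pairwise disjoint nonempty open subsets of Δ, and F : Δ → Δ a Borel map such that for each i ∈ I the restriction F|_{P_i} is a homeomorphism from P_i onto Δ whose inverse (F|_{P_i})^{-1} : Δ → P_i is a ρ-Lipschitz contraction for some fixed ρ ∈ (0,1). Let (a_i)_{i ∈ I} be positive real numbers with ∑_{i ∈ I} a_i = 1. Then there exists a Borel probability measure ν on Δ such that: (i) for every n ≥ 1 and every finite word (i_0, …, i_{n−1}) ∈ Iⁿ, ν(P_{i_0} ∩ F^{-1}(P_{i_1}) ∩ … ∩ F^{-(n−1)}(P_{i_{n−1}})) = a_{i_0} a_{i_1} ⋯ a_{i_{n−1}}; (ii) ν is F-invariant; and (iii) the system (F, ν) is ergodic. -/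
open MeasureTheory Filter Topology ProbabilityTheory Function
open scoped NNReal

/-!
The measure is the image of the Bernoulli measure `pᴺ`, `p {i} = a i`, under the coding map
`π : Iᴺ → Δ`, `π ω = lim g_{ω 0} (g_{ω 1} (⋯ g_{ω (n-1)} x₀))`, where the `g i` are the
contracting inverse branches of `F`. Since `π` semiconjugates the left shift to `F` and the
`π`-preimage of the cylinder of `w` is `{ω | ω j = w j for j < n}`, the cylinder masses,
the invariance and the ergodicity all come from the Bernoulli shift, which is ergodic by
Kolmogorov's 0-1 law applied to the coordinates.
-/

section BernoulliShift

variable {α : Type*}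

def leftShift (ω : ℕ → α) : ℕ → α := fun n => ω (n + 1)

lemma leftShift_iterate_apply (n : ℕ) (ω : ℕ → α) (k : ℕ) : leftShift^[n] ω k = ω (k + n) := by
  induction n generalizing ω with
  | zero => rfl
  | succ n ih => rw [iterate_succ_apply, ih]; rfl

variable [MeasurableSpace α]

lemma measurable_leftShift : Measurable (leftShift : (ℕ → α) → ℕ → α) :=
  measurable_pi_lambda _ fun n => measurable_pi_apply (n + 1)

variable (p : Measure α) [IsProbabilityMeasure p]

lemma measurePreserving_leftShift_infinitePi :
    MeasurePreserving leftShift (Measure.infinitePi fun _ : ℕ => p)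
      (Measure.infinitePi fun _ : ℕ => p) :=
  ⟨measurable_leftShift, Measure.map_infinitePi_infinitePi_of_inj Nat.succ_injective⟩

lemma measurableSet_limsup_comap_eval_of_leftShift_preimage_eq {s : Set (ℕ → α)}
    (hs : MeasurableSet s) (hinv : leftShift ⁻¹' s = s) :
    MeasurableSet[limsup (fun n => MeasurableSpace.comap (fun ω : ℕ → α => ω n) ‹_›) atTop] s := by
  rw [limsup_eq_iInf_iSup_of_nat, MeasurableSpace.measurableSet_iInf]
  intro n
  have hshift : Measurable[⨆ m ≥ n, MeasurableSpace.comap (fun ω : ℕ → α => ω m) ‹_›]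
      (leftShift^[n]) := by
    refine @measurable_pi_lambda _ _ _ (_) _ _ fun k => ?_
    simp_rw [leftShift_iterate_apply]
    exact (comap_measurable _).mono (le_iSup₂_of_le (k + n) (Nat.le_add_left n k) le_rfl) le_rfl
  rw [← IsFixedPt.preimage_iterate hinv n]
  exact hshift hs

theorem ergodic_leftShift_infinitePi : Ergodic leftShift (Measure.infinitePi fun _ : ℕ => p) where
  toMeasurePreserving := measurePreserving_leftShift_infinitePi p
  aeconst_set s hs hinv := by
    have hindep : iIndep (fun n => MeasurableSpace.comap (fun ω : ℕ → α => ω n) ‹_›)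
        (Measure.infinitePi fun _ : ℕ => p) :=
      (iIndepFun_infinitePi (P := fun _ : ℕ => p) (X := fun _ => id) fun _ => measurable_id).iIndep
    rw [eventuallyConst_set']
    rcases measure_zero_or_one_of_measurableSet_limsup_atTop
      (fun n => (measurable_pi_apply n).comap_le) hindep
      (measurableSet_limsup_comap_eval_of_leftShift_preimage_eq hs hinv) with h | h
    · exact Or.inl (ae_eq_empty.mpr h)
    · exact Or.inr (ae_eq_univ_iff_measure_eq hs.nullMeasurableSet |>.mpr (by simpa using h))

lemma infinitePi_setOf_forall_fin_eq [MeasurableSingletonClass α] {n : ℕ} (w : Fin n → α) :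
    Measure.infinitePi (fun _ : ℕ => p) {ω | ∀ j : Fin n, ω j = w j} = ∏ j, p {w j} := by
  have hcyl : {ω : ℕ → α | ∀ j : Fin n, ω j = w j} = (fun ω (j : Fin n) => ω j) ⁻¹' {w} := by
    ext ω; simp [funext_iff]
  rw [hcyl, ← Measure.map_apply (by fun_prop) (measurableSet_singleton w),
    Measure.map_infinitePi_infinitePi_of_inj Fin.val_injective,
    Measure.infinitePi_singleton_of_fintype]

end BernoulliShift

section CodingMap

variable {ι X : Type*} [Nonempty X]

-- The starting point is irrelevant: the branches contract, so the limit does not depend on it.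
noncomputable def codingApprox (g : ι → X → X) : ℕ → (ℕ → ι) → X
  | 0, _ => Classical.arbitrary X
  | n + 1, ω => g (ω 0) (codingApprox g n (leftShift ω))

noncomputable def codingMap [TopologicalSpace X] (g : ι → X → X) (ω : ℕ → ι) : X :=
  limUnder atTop fun n => codingApprox g n ω

lemma measurable_codingApprox [MeasurableSpace ι] [MeasurableSingletonClass ι] [Countable ι]
    [MeasurableSpace X] {g : ι → X → X} (hg : ∀ i, Measurable (g i)) (n : ℕ) :
    Measurable (codingApprox g n) := by
  induction n with
  | zero => exact measurable_const
  | succ n ih =>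
    have hgu : Measurable fun q : X × ι => g q.2 q.1 := measurable_from_prod_countable_left hg
    exact hgu.comp ((ih.comp measurable_leftShift).prodMk (measurable_pi_apply 0))

variable [MetricSpace X] {g : ι → X → X} {K : ℝ≥0}

lemma dist_codingApprox_succ_le (hg : ∀ i, LipschitzWith K (g i))
    (hX : Bornology.IsBounded (Set.univ : Set X)) (n : ℕ) (ω : ℕ → ι) :
    dist (codingApprox g n ω) (codingApprox g (n + 1) ω) ≤
      Metric.diam (Set.univ : Set X) * K ^ n := by
  induction n generalizing ω with
  | zero => simpa using Metric.dist_le_diam_of_mem hX (Set.mem_univ _) (Set.mem_univ _)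
  | succ n ih =>
    calc dist (codingApprox g (n + 1) ω) (codingApprox g (n + 2) ω)
        ≤ K * dist (codingApprox g n (leftShift ω)) (codingApprox g (n + 1) (leftShift ω)) :=
          (hg (ω 0)).dist_le_mul _ _
      _ ≤ K * (Metric.diam (Set.univ : Set X) * K ^ n) := by gcongr; exact ih _
      _ = Metric.diam (Set.univ : Set X) * K ^ (n + 1) := by ring

variable [CompleteSpace X]

lemma tendsto_codingApprox (hg : ∀ i, LipschitzWith K (g i)) (hK : K < 1)
    (hX : Bornology.IsBounded (Set.univ : Set X)) (ω : ℕ → ι) :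
    Tendsto (fun n => codingApprox g n ω) atTop (𝓝 (codingMap g ω)) :=
  (cauchySeq_of_le_geometric _ _ hK fun n => dist_codingApprox_succ_le hg hX n ω).tendsto_limUnder

lemma codingMap_eq (hg : ∀ i, LipschitzWith K (g i)) (hK : K < 1)
    (hX : Bornology.IsBounded (Set.univ : Set X)) (ω : ℕ → ι) :
    codingMap g ω = g (ω 0) (codingMap g (leftShift ω)) :=
  tendsto_nhds_unique ((tendsto_codingApprox hg hK hX ω).comp (tendsto_add_atTop_nat 1))
    (((hg (ω 0)).continuous.tendsto _).comp (tendsto_codingApprox hg hK hX (leftShift ω)))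

lemma measurable_codingMap [MeasurableSpace ι] [MeasurableSingletonClass ι] [Countable ι]
    [MeasurableSpace X] [BorelSpace X]
    (hg : ∀ i, LipschitzWith K (g i)) (hK : K < 1)
    (hX : Bornology.IsBounded (Set.univ : Set X)) : Measurable (codingMap g) :=
  measurable_of_tendsto_metrizable' atTop
    (measurable_codingApprox fun i => (hg i).continuous.measurable)
    (tendsto_pi_nhds.mpr (tendsto_codingApprox hg hK hX))

end CodingMap

section FullBranch

variable {ι X : Type*} [MetricSpace X] [Nonempty X]

lemma lipschitzWith_invFunOn {F : X → X} {s : Set X} {K : ℝ≥0} (hF : Set.SurjOn F s Set.univ)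
    (hexp : ∀ x ∈ s, ∀ x' ∈ s, dist x x' ≤ K * dist (F x) (F x')) :
    LipschitzWith K (invFunOn F s) := by
  refine LipschitzWith.of_dist_le_mul fun y y' => ?_
  have hy := hF (Set.mem_univ y)
  have hy' := hF (Set.mem_univ y')
  simpa only [invFunOn_eq hy, invFunOn_eq hy'] using
    hexp _ (invFunOn_mem hy) _ (invFunOn_mem hy')

variable [CompleteSpace X] {F : X → X} {P : ι → Set X} {g : ι → X → X} {K : ℝ≥0}
  (hg : ∀ i, LipschitzWith K (g i)) (hK : K < 1) (hX : Bornology.IsBounded (Set.univ : Set X))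
  (hFg : ∀ i, LeftInverse F (g i))
include hg hK hX hFg

lemma semiconj_codingMap : Semiconj (codingMap g) leftShift F := fun ω =>
  ((congrArg F (codingMap_eq hg hK hX ω)).trans (hFg _ _)).symm

lemma iterate_codingMap_mem (hgP : ∀ i y, g i y ∈ P i) (ω : ℕ → ι) (j : ℕ) :
    F^[j] (codingMap g ω) ∈ P (ω j) := by
  rw [← (semiconj_codingMap hg hK hX hFg).iterate_right j ω, codingMap_eq hg hK hX,
    leftShift_iterate_apply, zero_add]
  exact hgP _ _

lemma preimage_codingMap_cylinder (hgP : ∀ i y, g i y ∈ P i) (hP : Pairwise (Disjoint on P))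
    {n : ℕ} (w : Fin n → ι) :
    codingMap g ⁻¹' ⋂ j : Fin n, F^[j] ⁻¹' P (w j) = {ω | ∀ j : Fin n, ω j = w j} := by
  ext ω
  simp only [Set.mem_preimage, Set.mem_iInter]
  have hmem := iterate_codingMap_mem hg hK hX hFg hgP ω
  refine forall_congr' fun j => ⟨fun hj => ?_, fun hj => hj ▸ hmem j⟩
  by_contra hne
  exact Set.disjoint_left.mp (hP hne) (hmem j) hj

end FullBranch

lemma hasSum_ofReal_of_tsum_eq_one {ι : Type*} {a : ι → ℝ} (ha : ∀ i, 0 ≤ a i)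
    (hsum : ∑' i, a i = 1) : HasSum (fun i => ENNReal.ofReal (a i)) 1 := by
  have hsummable : Summable a := by
    by_contra h
    exact zero_ne_one ((tsum_eq_zero_of_not_summable h).symm.trans hsum)
  rw [← ENNReal.ofReal_one, ← hsum, ENNReal.ofReal_tsum_of_nonneg ha hsummable]
  exact ENNReal.summable.hasSum

theorem bernoulli_measure_for_full_branch_markov_general {Δ : Type*} [MetricSpace Δ]
    [CompleteSpace Δ] [Nonempty Δ] [MeasurableSpace Δ] [BorelSpace Δ]
    (hbdd : Bornology.IsBounded (Set.univ : Set Δ))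
    {I : Type*} [Countable I]
    (P : I → Set Δ) (hopen : ∀ i, IsOpen (P i))
    (hdisj : ∀ i j, i ≠ j → Disjoint (P i) (P j))
    (F : Δ → Δ) (hF : Measurable F)
    (ρ : ℝ) (hρ0 : 0 < ρ) (hρ1 : ρ < 1)
    (hFP : ∀ i, ContinuousOn F (P i) ∧ Set.BijOn F (P i) Set.univ ∧
      ∀ x ∈ P i, ∀ x' ∈ P i, dist x x' ≤ ρ * dist (F x) (F x'))
    (a : I → ℝ) (ha : ∀ i, 0 < a i) (hsum : ∑' i, a i = 1) :
    ∃ ν : Measure Δ, IsProbabilityMeasure ν ∧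
      (∀ n : ℕ, 1 ≤ n → ∀ w : Fin n → I,
        ν (⋂ j : Fin n, F^[(j : ℕ)] ⁻¹' P (w j)) =
          ENNReal.ofReal (∏ j : Fin n, a (w j))) ∧
      (∀ A : Set Δ, MeasurableSet A → ν (F ⁻¹' A) = ν A) ∧
      (∀ A : Set Δ, MeasurableSet A → F ⁻¹' A = A → ν A = 0 ∨ ν A = 1) := by
  let _ : MeasurableSpace I := ⊤
  let g : I → Δ → Δ := fun i => invFunOn F (P i)
  have hg : ∀ i, LipschitzWith ⟨ρ, hρ0.le⟩ (g i) := fun i =>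
    lipschitzWith_invFunOn (hFP i).2.1.surjOn (hFP i).2.2
  have hK : (⟨ρ, hρ0.le⟩ : ℝ≥0) < 1 := hρ1
  have hFg : ∀ i, LeftInverse F (g i) := fun i y =>
    invFunOn_eq ((hFP i).2.1.surjOn (Set.mem_univ y))
  have hgP : ∀ i y, g i y ∈ P i := fun i y =>
    invFunOn_mem ((hFP i).2.1.surjOn (Set.mem_univ y))
  let p : PMF I := ⟨_, hasSum_ofReal_of_tsum_eq_one (fun i => (ha i).le) hsum⟩
  have hπ : Measurable (codingMap g) := measurable_codingMap hg hK hbdd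
  let ν := (Measure.infinitePi fun _ : ℕ => p.toMeasure).map (codingMap g)
  have hν : IsProbabilityMeasure ν := Measure.isProbabilityMeasure_map hπ.aemeasurable
  have hergodic : Ergodic F ν :=
    MeasurePreserving.ergodic_of_ergodic_semiconj ⟨hπ, rfl⟩ (ergodic_leftShift_infinitePi _) hF
      (semiconj_codingMap hg hK hbdd hFg)
  refine ⟨ν, hν, fun n _ w => ?_,
    fun A hA => hergodic.measure_preimage hA.nullMeasurableSet,
    fun A hA hinv => hergodic.prob_eq_zero_or_one hA hinv⟩
  rw [Measure.map_apply hπ (.iInter fun j => hF.iterate _ (hopen _).measurableSet),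
    preimage_codingMap_cylinder hg hK hbdd hFg hgP (fun i j => hdisj i j),
    infinitePi_setOf_forall_fin_eq, ENNReal.ofReal_prod_of_nonneg fun j _ => (ha _).le]
  exact Finset.prod_congr rfl fun j _ =>
    PMF.toMeasure_apply_singleton _ _ (measurableSet_singleton _)

/-- Let `Δ` be a nonempty bounded complete metric space, `(P i)_{i : I}` a countable
family of pairwise disjoint nonempty open subsets of `Δ`, and `F : Δ → Δ` a Borel map
mapping each `P i` homeomorphically onto `Δ` with inverse a `ρ`-Lipschitz contraction
(`ρ ∈ (0,1)`). Given positive reals `(a i)` with `∑ a i = 1`, there is a Borel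
probability ("Bernoulli") measure `ν` on `Δ` giving each `n`-cylinder
`P_{i₀} ∩ F⁻¹ P_{i₁} ∩ ⋯ ∩ F^{-(n-1)} P_{i_{n-1}}` the mass `a_{i₀} ⋯ a_{i_{n-1}}`,
which is `F`-invariant and ergodic. -/
theorem bernoulli_measure_for_full_branch_markov {Δ : Type*} [MetricSpace Δ]
    [CompleteSpace Δ] [Nonempty Δ] [MeasurableSpace Δ] [BorelSpace Δ]
    (hbdd : Bornology.IsBounded (Set.univ : Set Δ))
    {I : Type*} [Countable I]
    (P : I → Set Δ) (hopen : ∀ i, IsOpen (P i)) (hne : ∀ i, (P i).Nonempty)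
    (hdisj : ∀ i j, i ≠ j → Disjoint (P i) (P j))
    (F : Δ → Δ) (hF : Measurable F)
    (ρ : ℝ) (hρ0 : 0 < ρ) (hρ1 : ρ < 1)
    (hFP : ∀ i, ContinuousOn F (P i) ∧ Set.BijOn F (P i) Set.univ ∧
      ∀ x ∈ P i, ∀ x' ∈ P i, dist x x' ≤ ρ * dist (F x) (F x'))
    (a : I → ℝ) (ha : ∀ i, 0 < a i) (hsum : ∑' i, a i = 1) :
    ∃ ν : Measure Δ, IsProbabilityMeasure ν ∧
      (∀ n : ℕ, 1 ≤ n → ∀ w : Fin n → I,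
        ν (⋂ j : Fin n, F^[(j : ℕ)] ⁻¹' P (w j)) =
          ENNReal.ofReal (∏ j : Fin n, a (w j))) ∧
      (∀ A : Set Δ, MeasurableSet A → ν (F ⁻¹' A) = ν A) ∧
      (∀ A : Set Δ, MeasurableSet A → F ⁻¹' A = A → ν A = 0 ∨ ν A = 1) :=
  bernoulli_measure_for_full_branch_markov_general hbdd P hopen hdisj F hF ρ hρ0 hρ1 hFP a ha hsum
end

section
/- Let M be a compact metric space with its Borel σ-algebra, f : M → M a Borel measurable map, Δ ⊆ M a nonempty Borel subset, and R : Δ → ℕ a Borel measurable function with R(x) ≥ 1 and f^{R(x)}(x) ∈ Δ for all x ∈ Δ; let F : Δ → Δ be the induced map F(x) = f^{R(x)}(x). Let ν be an F-invariant ergodic Borel probability measure on Δ with ∫_Δ R dν < ∞. Then the measure μ := (∫_Δ R dν)^{-1} · ∑_{j=0}^{∞} (f^j)_* (ν|_{{x ∈ Δ : R(x) > j}}) is an f-invariant ergodic Borel probability measure on M. -/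
open MeasureTheory ENNReal Set Function

/-!
Kac's tower: the measure `(f^j)_* (ν|_{R > j})` is the `j`-th floor of a tower over `Δ`, and the
total mass of the tower is `∑ j, ν {R > j} = ∫ R dν`. Applying `f` moves floor `j` onto floor
`j + 1`, except for the part `{R = j + 1}`, which lands back in `Δ` through the return map `F`;
by `F`-invariance these returning pieces add up to `ν`, the floor `0`. Hence the tower is
`f`-invariant. An `f`-invariant set `s` meets every floor in the trace of the `F`-invariant set
`Δ ∩ s`, so ergodicity of `ν` gives `s` zero or full mass.
-/

lemma ENNReal.tsum_ite_lt (n : ℕ) : ∑' j : ℕ, (if j < n then 1 else 0 : ℝ≥0∞) = n := by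
  rw [tsum_eq_sum (s := Finset.range n) fun j hj => if_neg (by simpa using hj)]
  simp [Finset.filter_true_of_mem fun j hj => Finset.mem_range.mp hj]

namespace MeasureTheory

section NatValued

variable {α : Type*} [MeasurableSpace α] {μ : Measure α} {R : α → ℕ}

lemma tsum_measure_lt_eq_lintegral (hR : Measurable R) :
    ∑' j, μ {x | j < R x} = ∫⁻ x, R x ∂μ := by
  have hS (j : ℕ) : MeasurableSet {x | j < R x} := measurableSet_lt measurable_const hR
  calc ∑' j, μ {x | j < R x} = ∑' j, ∫⁻ x, {x | j < R x}.indicator 1 x ∂μ := by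
        simp_rw [lintegral_indicator_one (hS _)]
    _ = ∫⁻ x, ∑' j, {x | j < R x}.indicator 1 x ∂μ :=
        (lintegral_tsum fun j => (measurable_one.indicator (hS j)).aemeasurable).symm
    _ = ∫⁻ x, R x ∂μ := lintegral_congr fun x => by
        simpa [indicator_apply] using ENNReal.tsum_ite_lt (R x)

lemma measure_inter_lt_eq_add (hR : Measurable R) (T : Set α) (j : ℕ) :
    μ (T ∩ {x | j < R x}) = μ (T ∩ {x | j + 1 < R x}) + μ (T ∩ {x | R x = j + 1}) := by
  rw [← measure_inter_add_sdiff (T ∩ {x | j < R x}) (hR (measurableSet_singleton (j + 1))),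
    add_comm]
  congr 2 <;> ext x <;> simp only [mem_inter_iff, mem_sdiff, mem_ofPred_eq, mem_preimage,
    mem_singleton_iff] <;> grind

end NatValued

lemma preimage_induced_eq_iUnion {X : Type*} {f : X → X} {Δ : Set X} {R : Δ → ℕ} {F : Δ → Δ}
    (hF : ∀ x, (F x : X) = f^[R x] x) (s : Set X) :
    F ⁻¹' ((↑) ⁻¹' s) = ⋃ n, (fun x : Δ => f^[n] x) ⁻¹' s ∩ {x | R x = n} := by
  ext x
  simp [hF]

section Tower

variable {X : Type*} [MeasurableSpace X] {f : X → X} {Δ : Set X} {R : Δ → ℕ} {F : Δ → Δ}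
  {ν : Measure Δ} {s : Set X}

noncomputable def towerMeasure (f : X → X) (R : Δ → ℕ) (ν : Measure Δ) : Measure X :=
  Measure.sum fun j => (ν.restrict {x | j < R x}).map fun x : Δ => f^[j] (x : X)

lemma measurable_iterate_val (hf : Measurable f) (j : ℕ) : Measurable fun x : Δ => f^[j] x :=
  (hf.iterate j).comp measurable_subtype_coe

lemma towerMeasure_apply (hf : Measurable f) (hs : MeasurableSet s) :
    towerMeasure f R ν s = ∑' j, ν ((fun x : Δ => f^[j] x) ⁻¹' s ∩ {x | j < R x}) := by
  rw [towerMeasure, Measure.sum_apply _ hs]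
  refine tsum_congr fun j => ?_
  rw [Measure.map_apply (measurable_iterate_val hf j) hs,
    Measure.restrict_apply (measurable_iterate_val hf j hs)]

lemma towerMeasure_apply_of_preimage_eq (hf : Measurable f) (hR : Measurable R)
    (hs : MeasurableSet s) (hfs : f ⁻¹' s = s) :
    towerMeasure f R ν s = ∫⁻ x in (↑) ⁻¹' s, R x ∂ν := by
  have hiter (j : ℕ) : (fun x : Δ => f^[j] x) ⁻¹' s = (↑) ⁻¹' s := by
    rw [show (fun x : Δ => f^[j] x) = f^[j] ∘ (↑) from rfl, preimage_comp,
      IsFixedPt.preimage_iterate hfs]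
  rw [towerMeasure_apply hf hs, ← tsum_measure_lt_eq_lintegral hR]
  refine tsum_congr fun j => ?_
  rw [hiter, inter_comm, Measure.restrict_apply (measurableSet_lt measurable_const hR)]

lemma towerMeasure_univ (hf : Measurable f) (hR : Measurable R) :
    towerMeasure f R ν univ = ∫⁻ x, R x ∂ν := by
  rw [towerMeasure_apply_of_preimage_eq hf hR .univ (preimage_univ), preimage_univ,
    Measure.restrict_univ]

lemma measure_preimage_induced (hf : Measurable f) (hR : Measurable R)
    (hF : ∀ x, (F x : X) = f^[R x] x) (hs : MeasurableSet s) :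
    ν (F ⁻¹' ((↑) ⁻¹' s)) = ∑' n, ν ((fun x : Δ => f^[n] x) ⁻¹' s ∩ {x | R x = n}) := by
  rw [preimage_induced_eq_iUnion hF, measure_iUnion]
  · exact fun m n hmn => Disjoint.mono inter_subset_right inter_subset_right
      (disjoint_left.2 fun x hm hn => hmn (hm.symm.trans hn))
  · exact fun n => measurable_iterate_val hf n hs |>.inter (hR (measurableSet_singleton n))

lemma towerMeasure_preimage (hf : Measurable f) (hR : Measurable R) (hR0 : ∀ x, 0 < R x)
    (hF : ∀ x, (F x : X) = f^[R x] x) (hνinv : ∀ B, MeasurableSet B → ν (F ⁻¹' B) = ν B)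
    (hs : MeasurableSet s) : towerMeasure f R ν (f ⁻¹' s) = towerMeasure f R ν s := by
  have hshift (j : ℕ) :
      (fun x : Δ => f^[j] x) ⁻¹' (f ⁻¹' s) = (fun x : Δ => f^[j + 1] x) ⁻¹' s := by
    ext x
    simp [iterate_succ_apply']
  have hreturn : ∑' j, ν ((fun x : Δ => f^[j + 1] x) ⁻¹' s ∩ {x | R x = j + 1}) =
      ν ((fun x : Δ => f^[0] x) ⁻¹' s ∩ {x | 0 < R x}) := by
    have hR_ne_zero : {x | R x = 0} = ∅ := eq_empty_of_forall_notMem fun x hx => (hR0 x).ne' hx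
    have hR_pos : {x | 0 < R x} = univ := eq_univ_of_forall hR0
    rw [hR_pos, inter_univ]
    change _ = ν ((↑) ⁻¹' s)
    rw [← hνinv _ (measurable_subtype_coe hs), measure_preimage_induced hf hR hF hs,
      tsum_eq_zero_add' (f := fun n => ν ((fun x : Δ => f^[n] x) ⁻¹' s ∩ {x | R x = n}))
        ENNReal.summable, hR_ne_zero, inter_empty, measure_empty, zero_add]
  calc towerMeasure f R ν (f ⁻¹' s)
      = ∑' j, ν ((fun x : Δ => f^[j + 1] x) ⁻¹' s ∩ {x | j < R x}) := by
        simp_rw [towerMeasure_apply hf (hf hs), hshift]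
    _ = ∑' j, ν ((fun x : Δ => f^[j + 1] x) ⁻¹' s ∩ {x | j + 1 < R x}) +
          ∑' j, ν ((fun x : Δ => f^[j + 1] x) ⁻¹' s ∩ {x | R x = j + 1}) := by
        rw [← ENNReal.tsum_add]
        exact tsum_congr fun j => measure_inter_lt_eq_add hR _ j
    _ = towerMeasure f R ν s := by
        rw [hreturn, add_comm, towerMeasure_apply hf hs]
        exact (tsum_eq_zero_add'
          (f := fun j => ν ((fun x : Δ => f^[j] x) ⁻¹' s ∩ {x | j < R x})) ENNReal.summable).symm

lemma towerMeasure_eq_zero_or_eq_univ [IsProbabilityMeasure ν] (hf : Measurable f)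
    (hR : Measurable R) (hF : ∀ x, (F x : X) = f^[R x] x)
    (hνerg : ∀ B, MeasurableSet B → F ⁻¹' B = B → ν B = 0 ∨ ν B = 1)
    (hs : MeasurableSet s) (hfs : f ⁻¹' s = s) :
    towerMeasure f R ν s = 0 ∨ towerMeasure f R ν s = towerMeasure f R ν univ := by
  have hB : MeasurableSet ((↑) ⁻¹' s : Set Δ) := measurable_subtype_coe hs
  have hFB : F ⁻¹' ((↑) ⁻¹' s) = (↑) ⁻¹' s := by
    ext x
    rw [mem_preimage, mem_preimage, hF, ← mem_preimage, IsFixedPt.preimage_iterate hfs,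
      mem_preimage]
  rw [towerMeasure_apply_of_preimage_eq hf hR hs hfs, towerMeasure_univ hf hR]
  refine (hνerg _ hB hFB).imp (setLIntegral_measure_zero _ _) fun h1 => ?_
  rw [Measure.restrict_eq_self_of_ae_mem
    ((ae_mem_iff_measure_eq hB.nullMeasurableSet).2 (h1.trans measure_univ.symm))]

end Tower

end MeasureTheory

theorem induced_measure_spreads_to_invariant_ergodic_general {M : Type*} [MeasurableSpace M]
    (f : M → M) (hf : Measurable f)
    (Δ : Set M)
    (R : Δ → ℕ) (hRmeas : Measurable R) (hR1 : ∀ x : Δ, 1 ≤ R x)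
    (F : Δ → Δ) (hF : ∀ x : Δ, (F x : M) = f^[R x] (x : M))
    (ν : Measure Δ) (hνprob : IsProbabilityMeasure ν)
    (hνinv : ∀ A : Set Δ, MeasurableSet A → ν (F ⁻¹' A) = ν A)
    (hνerg : ∀ A : Set Δ, MeasurableSet A → F ⁻¹' A = A → ν A = 0 ∨ ν A = 1)
    (hνint : Integrable (fun x : Δ => (R x : ℝ)) ν)
    (μ : Measure M)
    (hμ : μ = (ENNReal.ofReal (∫ x, (R x : ℝ) ∂ν))⁻¹ •
      Measure.sum (fun j : ℕ =>
        Measure.map (fun x : Δ => f^[j] (x : M)) (ν.restrict {x : Δ | j < R x}))) :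
    IsProbabilityMeasure μ ∧
      (∀ A : Set M, MeasurableSet A → μ (f ⁻¹' A) = μ A) ∧
      (∀ A : Set M, MeasurableSet A → f ⁻¹' A = A → μ A = 0 ∨ μ A = 1) := by
  have hc : ENNReal.ofReal (∫ x, (R x : ℝ) ∂ν) = towerMeasure f R ν univ := by
    rw [towerMeasure_univ hf hRmeas,
      ofReal_integral_eq_lintegral_ofReal hνint (ae_of_all _ fun x => Nat.cast_nonneg _)]
    simp_rw [ENNReal.ofReal_natCast]
  have hc_ne_zero : towerMeasure f R ν univ ≠ 0 := by
    rw [towerMeasure_univ hf hRmeas]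
    refine (lt_of_lt_of_le ?_ (lintegral_mono fun x => Nat.one_le_cast.2 (hR1 x))).ne'
    simp
  have hc_ne_top : towerMeasure f R ν univ ≠ ∞ := hc ▸ ofReal_ne_top
  have hnorm := ENNReal.inv_mul_cancel hc_ne_zero hc_ne_top
  replace hμ : μ = (towerMeasure f R ν univ)⁻¹ • towerMeasure f R ν := by rw [hμ, hc]; rfl
  subst hμ
  refine ⟨⟨by simpa⟩, fun A hA => ?_, fun A hA hfA => ?_⟩
  · simp [towerMeasure_preimage hf hRmeas hR1 hF hνinv hA]
  · rcases towerMeasure_eq_zero_or_eq_univ hf hRmeas hF hνerg hA hfA with h | h <;> simp [h, hnorm]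

/-- Let `f` be a Borel self-map of a compact metric space `M`, `Δ ⊆ M` a nonempty
Borel subset, `R : Δ → ℕ` a Borel return time (`R ≥ 1`, `f^{R(x)}(x) ∈ Δ`), and
`F : Δ → Δ` the induced map `F(x) = f^{R(x)}(x)`. If `ν` is an `F`-invariant ergodic
Borel probability measure on `Δ` with `∫ R dν < ∞`, then the spread-out measure
`μ = (∫ R dν)⁻¹ ∑_{j≥0} (f^j)_*(ν|_{{R > j}})` is an `f`-invariant ergodic Borel
probability measure on `M`. -/
theorem induced_measure_spreads_to_invariant_ergodic {M : Type*} [MetricSpace M]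
    [CompactSpace M] [MeasurableSpace M] [BorelSpace M]
    (f : M → M) (hf : Measurable f)
    (Δ : Set M) (hΔmeas : MeasurableSet Δ) (hΔne : Δ.Nonempty)
    (R : Δ → ℕ) (hRmeas : Measurable R) (hR1 : ∀ x : Δ, 1 ≤ R x)
    (hRin : ∀ x : Δ, f^[R x] (x : M) ∈ Δ)
    (F : Δ → Δ) (hF : ∀ x : Δ, (F x : M) = f^[R x] (x : M))
    (ν : Measure Δ) (hνprob : IsProbabilityMeasure ν)
    (hνinv : ∀ A : Set Δ, MeasurableSet A → ν (F ⁻¹' A) = ν A)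
    (hνerg : ∀ A : Set Δ, MeasurableSet A → F ⁻¹' A = A → ν A = 0 ∨ ν A = 1)
    (hνint : Integrable (fun x : Δ => (R x : ℝ)) ν)
    (μ : Measure M)
    (hμ : μ = (ENNReal.ofReal (∫ x, (R x : ℝ) ∂ν))⁻¹ •
      Measure.sum (fun j : ℕ =>
        Measure.map (fun x : Δ => f^[j] (x : M)) (ν.restrict {x : Δ | j < R x}))) :
    IsProbabilityMeasure μ ∧
      (∀ A : Set M, MeasurableSet A → μ (f ⁻¹' A) = μ A) ∧
      (∀ A : Set M, MeasurableSet A → f ⁻¹' A = A → μ A = 0 ∨ μ A = 1) :=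
  induced_measure_spreads_to_invariant_ergodic_general f hf Δ R hRmeas hR1 F hF ν hνprob hνinv hνerg
    hνint μ hμ
end

section
/- Let M be a compact metric space without isolated points and f : M → M a local homeomorphism (hence every fiber f^{-1}(y) is finite). For x ∈ M, define the α-limit set α_f(x) as the set of points y ∈ M for which there exist a sequence of integers n_k → ∞ and points x_k ∈ M with f^{n_k}(x_k) = x and x_k → y. Then α_f(x) = M if and only if the pre-orbit O⁻(x) = ⋃_{n ≥ 0} f^{-n}({x}) is dense in M. -/
open Filter Topology Set

/-!
A local homeomorphism of a compact space has finite fibres, and so does each iterate. Hence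
removing from the pre-orbit of `x` the finitely many points `w` with `f^[n] w = x` for some
`n < N` leaves a set that is still dense, because the space has no isolated points. Every `y`
is therefore a limit of points of `f^{-n}(x)` with `n ≥ N`, for every `N`, which yields the
sequence `n_k → ∞`, `x_k → y` by a diagonal choice.
-/

theorem IsLocalHomeomorph.iterate {X : Type*} [TopologicalSpace X] {f : X → X}
    (hf : IsLocalHomeomorph f) (n : ℕ) : IsLocalHomeomorph f^[n] := by
  induction n with
  | zero => exact (Homeomorph.refl X).isLocalHomeomorph
  | succ n ih => rw [Function.iterate_succ]; exact ih.comp hf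

theorem IsLocalHomeomorph.finite_preimage_singleton {X Y : Type*} [TopologicalSpace X]
    [CompactSpace X] [TopologicalSpace Y] [T1Space Y] {f : X → Y} (hf : IsLocalHomeomorph f)
    (y : Y) : (f ⁻¹' {y}).Finite :=
  (isClosed_singleton.preimage hf.continuous).isCompact.finite <|
    hf.isLocalHomeomorphOn.isDiscrete_of_image <|
      (subsingleton_singleton.anti (image_preimage_subset f {y})).isDiscrete

theorem Dense.setOf_exists_ge_iterate_eq {X : Type*} [TopologicalSpace X] [CompactSpace X]
    [T1Space X] [∀ x : X, NeBot (𝓝[≠] x)] {f : X → X} (hf : IsLocalHomeomorph f) {x : X}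
    (hd : Dense {w | ∃ n, f^[n] w = x}) (N : ℕ) : Dense {w | ∃ n ≥ N, f^[n] w = x} := by
  have hfin : (⋃ m < N, f^[m] ⁻¹' {x}).Finite :=
    (finite_lt_nat N).biUnion fun m _ => (hf.iterate m).finite_preimage_singleton x
  refine (hd.sdiff_finite hfin).mono ?_
  rintro w ⟨⟨n, hn⟩, hw⟩
  exact ⟨n, not_lt.mp fun hlt => hw (mem_biUnion hlt hn), hn⟩

theorem exists_seq_tendsto_of_forall_mem_closure {X : Type*} [TopologicalSpace X]
    [FirstCountableTopology X] {P : ℕ → X → Prop} {y : X}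
    (h : ∀ N, y ∈ closure {w | ∃ n ≥ N, P n w}) :
    ∃ (φ : ℕ → ℕ) (xs : ℕ → X),
      Tendsto φ atTop atTop ∧ (∀ k, P (φ k) (xs k)) ∧ Tendsto xs atTop (𝓝 y) := by
  have hfreq : ∃ᶠ p in atTop ×ˢ 𝓝 y, P p.1 p.2 := by
    refine (atTop_basis.prod (𝓝 y).basis_sets).frequently_iff.mpr ?_
    rintro ⟨N, U⟩ ⟨-, hU⟩
    obtain ⟨w, hwU, n, hn, hP⟩ := mem_closure_iff_nhds.mp (h N) U hU
    exact ⟨(n, w), ⟨hn, hwU⟩, hP⟩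
  obtain ⟨ps, hps, hP⟩ := exists_seq_forall_of_frequently hfreq
  exact ⟨_, _, (tendsto_prod_iff'.mp hps).1, hP, (tendsto_prod_iff'.mp hps).2⟩

/-- Let `M` be a compact metric space without isolated points and `f : M → M` a local
homeomorphism. For `x : M`, the `α`-limit set of `x` equals all of `M` (every `y`
is a limit of points `x_k` with `f^{n_k}(x_k) = x`, `n_k → ∞`) if and only if the
pre-orbit `O⁻(x) = ⋃_{n ≥ 0} f^{-n}({x})` is dense in `M`. -/
theorem alphaLimit_eq_univ_iff_dense_preorbit {M : Type*} [MetricSpace M] [CompactSpace M]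
    (hM : ∀ x : M, Filter.NeBot (nhdsWithin x {x}ᶜ))
    (f : M → M) (hf : IsLocalHomeomorph f) (x : M) :
    (∀ y : M, ∃ (φ : ℕ → ℕ) (xs : ℕ → M),
        Tendsto φ atTop atTop ∧ (∀ k, f^[φ k] (xs k) = x) ∧ Tendsto xs atTop (𝓝 y)) ↔
      Dense {w : M | ∃ n : ℕ, f^[n] w = x} := by
  refine ⟨fun h y => ?_, fun hd y => ?_⟩
  · obtain ⟨φ, xs, -, hxs, hlim⟩ := h y
    exact mem_closure_of_tendsto hlim (.of_forall fun k => ⟨φ k, hxs k⟩)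
  · have : ∀ x : M, NeBot (𝓝[≠] x) := hM
    exact exists_seq_tendsto_of_forall_mem_closure fun N =>
      (hd.setOf_exists_ge_iterate_eq hf N).closure_eq ▸ mem_univ y
end
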